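/- arXiv:2308.07008 — 7 statements merged into one kernel-verified Lean document; each statement's English description precedes it below -/
import Mathlib

section
/- Let L be the Laplacian matrix of a connected weighted graph on a finite vertex set V, and let X be a diagonal matrix (indexed by V) with nonnegative diagonal entries, at least one of which is strictly positive. Then L + X is positive definite, and every entry of the inverse matrix (L + X)^{-1} is strictly positive. -/
open Matrix

/-- The simple graph whose adjacency relation is `i ≠ j ∧ W i j > 0`. -/
def weightedAdjGraph {V : Type*} (W : V → V → ℝ) (hsymm : ∀ i j, W i j = W j i) :
    SimpleGraph V where
  Adj i j := i ≠ j ∧ 0 < W i j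
  symm := by
    constructor
    intro i j h
    exact ⟨h.1.symm, by rw [← hsymm i j]; exact h.2⟩
  loopless := by constructor; intro i h; exact h.1 rfl

/-- The Laplacian matrix of a weighted graph: `L i i = ∑ j, W i j` and
`L i j = -W i j` for `i ≠ j`. -/
def laplacian {V : Type*} [Fintype V] [DecidableEq V] (W : V → V → ℝ) : Matrix V V ℝ :=
  Matrix.of fun i j => if i = j then ∑ k, W i k else -W i j

/-!
`M = L + diag x` is symmetric, has nonpositive off-diagonal entries, nonnegative row sums
`d i = W i i + x i`, one of them positive, and negative entries along the edges of a connected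
graph. Its quadratic form is `∑ d i * v i ^ 2 + ½ ∑ (-M i j) * (v i - v j) ^ 2`; if it vanishes,
`v` is constant along edges, hence constant, and zero where `d i > 0`, so `M` is positive definite.
For the inverse, a column `y` of `M⁻¹` solves `M y = e_j ≥ 0`. Since
`(M y) b = d b * y b - ∑ c, M b c * (y b - y c)`, at a nonpositive minimum `b` of `y` both terms
are `≤ 0`, so `(M y) b = 0` and the neighbours of `b` are minima too. By connectivity `y` would be
constant with `M y = 0`, which is absurd: this discrete minimum principle makes `y > 0`.
-/

theorem SimpleGraph.Reachable.of_forall_adj {V : Type*} {G : SimpleGraph V} {P : V → Prop}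
    (hP : ∀ a b, G.Adj a b → P a → P b) {a b : V} (hab : G.Reachable a b) (ha : P a) : P b := by
  obtain ⟨w⟩ := hab
  induction w with
  | nil => exact ha
  | cons hadj _ ih => exact ih (hP _ _ hadj ha)

namespace Matrix

variable {n : Type*} {M : Matrix n n ℝ}

theorem mul_sub_sq_nonpos_of_offDiag_nonpos (hoff : ∀ i j, i ≠ j → M i j ≤ 0) (v : n → ℝ)
    (i j : n) : M i j * (v i - v j) ^ 2 ≤ 0 := by
  rcases eq_or_ne i j with rfl | hij
  · simp
  · exact mul_nonpos_of_nonpos_of_nonneg (hoff i j hij) (sq_nonneg _)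

variable [Fintype n]

theorem mulVec_apply_eq_sum_mul_sub_sum (M : Matrix n n ℝ) (v : n → ℝ) (i : n) :
    (M *ᵥ v) i = (∑ j, M i j) * v i - ∑ j, M i j * (v i - v j) := by
  simp only [mulVec, dotProduct, mul_sub, Finset.sum_sub_distrib, Finset.sum_mul]
  ring

theorem IsSymm.dotProduct_mulVec_self (hM : M.IsSymm) (v : n → ℝ) :
    v ⬝ᵥ M *ᵥ v = ∑ i, (∑ j, M i j) * v i ^ 2 - (∑ i, ∑ j, M i j * (v i - v j) ^ 2) / 2 := by
  have hswap : ∑ i, ∑ j, M i j * (v j * (v i - v j)) = -∑ i, ∑ j, M i j * (v i * (v i - v j)) := by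
    rw [Finset.sum_comm, ← Finset.sum_neg_distrib]
    refine Finset.sum_congr rfl fun i _ => ?_
    rw [← Finset.sum_neg_distrib]
    refine Finset.sum_congr rfl fun j _ => ?_
    rw [hM.apply i j]
    ring
  have hsq : ∑ i, ∑ j, M i j * (v i - v j) ^ 2 = 2 * ∑ i, ∑ j, M i j * (v i * (v i - v j)) := by
    have h : ∀ i j, M i j * (v i - v j) ^ 2
        = M i j * (v i * (v i - v j)) - M i j * (v j * (v i - v j)) := fun i j => by ring
    simp only [h, Finset.sum_sub_distrib, hswap]
    ring
  have hrow : ∀ i, v i * (M *ᵥ v) i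
      = (∑ j, M i j) * v i ^ 2 - ∑ j, M i j * (v i * (v i - v j)) := fun i => by
    rw [mulVec_apply_eq_sum_mul_sub_sum, mul_sub, Finset.mul_sum]
    simp only [mul_left_comm (v i)]
    ring
  rw [dotProduct, Finset.sum_congr rfl fun i _ => hrow i, Finset.sum_sub_distrib, hsq]
  ring

theorem posDef_of_isSymm_of_offDiag_nonpos {G : SimpleGraph n} (hM : M.IsSymm)
    (hoff : ∀ i j, i ≠ j → M i j ≤ 0) (hrow : ∀ i, 0 ≤ ∑ j, M i j) (hrow₀ : ∃ i, 0 < ∑ j, M i j)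
    (hG : G.Connected) (hadj : ∀ i j, G.Adj i j → M i j < 0) : M.PosDef := by
  refine PosDef.of_dotProduct_mulVec_pos (isHermitian_iff_isSymm.mpr hM) fun v hv => ?_
  rw [star_trivial, hM.dotProduct_mulVec_self]
  have hvertex : ∀ i ∈ Finset.univ, 0 ≤ (∑ j, M i j) * v i ^ 2 :=
    fun i _ => mul_nonneg (hrow i) (sq_nonneg _)
  have hedge : ∀ i ∈ Finset.univ, ∑ j, M i j * (v i - v j) ^ 2 ≤ 0 :=
    fun i _ => Finset.sum_nonpos fun j _ => mul_sub_sq_nonpos_of_offDiag_nonpos hoff v i j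
  by_contra! hle
  have hvertex₀ := (Finset.sum_eq_zero_iff_of_nonneg hvertex).mp
    (le_antisymm (by linarith [Finset.sum_nonpos hedge]) (Finset.sum_nonneg hvertex))
  have hedge₀ := (Finset.sum_eq_zero_iff_of_nonpos hedge).mp
    (le_antisymm (Finset.sum_nonpos hedge) (by linarith [Finset.sum_nonneg hvertex]))
  have hconst : ∀ a b, G.Adj a b → v a = v b := fun a b hab => by
    have := (Finset.sum_eq_zero_iff_of_nonpos fun j _ =>
      mul_sub_sq_nonpos_of_offDiag_nonpos hoff v a j).mp (hedge₀ a (Finset.mem_univ _)) b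
      (Finset.mem_univ _)
    simpa [(hadj a b hab).ne, sub_eq_zero] using this
  obtain ⟨i₀, hi₀⟩ := hrow₀
  have hvi₀ : v i₀ = 0 := by simpa [hi₀.ne'] using hvertex₀ i₀ (Finset.mem_univ _)
  exact hv <| funext fun i =>
    (hG.preconnected i₀ i).of_forall_adj (fun a b hab ha => (hconst a b hab).symm.trans ha) hvi₀

theorem mulVec_apply_eq_zero_and_eq_of_adj_of_isMin {G : SimpleGraph n}
    (hoff : ∀ i j, i ≠ j → M i j ≤ 0) (hrow : ∀ i, 0 ≤ ∑ j, M i j)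
    (hadj : ∀ i j, G.Adj i j → M i j < 0) {y : n → ℝ} (hy : ∀ i, 0 ≤ (M *ᵥ y) i) {b : n}
    (hmin : ∀ c, y b ≤ y c) (hb : y b ≤ 0) :
    (M *ᵥ y) b = 0 ∧ ∀ c, G.Adj b c → y c = y b := by
  have hterm : ∀ c ∈ Finset.univ, 0 ≤ M b c * (y b - y c) := fun c _ => by
    rcases eq_or_ne b c with rfl | hbc
    · simp
    · exact mul_nonneg_of_nonpos_of_nonpos (hoff b c hbc) (by linarith [hmin c])
  have hsum := Finset.sum_nonneg hterm
  have hrow_mul : (∑ j, M b j) * y b ≤ 0 := mul_nonpos_of_nonneg_of_nonpos (hrow b) hb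
  have hMy := mulVec_apply_eq_sum_mul_sub_sum M y b
  have hsum₀ : ∑ c, M b c * (y b - y c) = 0 := by linarith [hy b]
  refine ⟨by linarith [hy b], fun c hbc => ?_⟩
  have := (Finset.sum_eq_zero_iff_of_nonneg hterm).mp hsum₀ c (Finset.mem_univ _)
  simpa [(hadj b c hbc).ne, sub_eq_zero, eq_comm] using this

theorem pos_of_mulVec_nonneg {G : SimpleGraph n} (hoff : ∀ i j, i ≠ j → M i j ≤ 0)
    (hrow : ∀ i, 0 ≤ ∑ j, M i j) (hG : G.Connected) (hadj : ∀ i j, G.Adj i j → M i j < 0)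
    {y : n → ℝ} (hy : ∀ i, 0 ≤ (M *ᵥ y) i) (hy₀ : M *ᵥ y ≠ 0) (i : n) : 0 < y i := by
  have := hG.nonempty
  obtain ⟨a, ha⟩ := Finite.exists_min y
  by_contra! hi
  have hmin : ∀ b, y b = y a → (M *ᵥ y) b = 0 ∧ ∀ c, G.Adj b c → y c = y b := fun b hb =>
    mulVec_apply_eq_zero_and_eq_of_adj_of_isMin hoff hrow hadj hy (hb ▸ ha)
      (hb ▸ (ha i).trans hi)
  have hall : ∀ b, y b = y a := fun b =>
    (hG.preconnected a b).of_forall_adj (fun c d hcd hc => ((hmin c hc).2 d hcd).trans hc) rfl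
  exact hy₀ <| funext fun b => (hmin b (hall b)).1

theorem inv_apply_pos_of_offDiag_nonpos [DecidableEq n] {G : SimpleGraph n} (hM : IsUnit M.det)
    (hoff : ∀ i j, i ≠ j → M i j ≤ 0) (hrow : ∀ i, 0 ≤ ∑ j, M i j) (hG : G.Connected)
    (hadj : ∀ i j, G.Adj i j → M i j < 0) (i j : n) : 0 < M⁻¹ i j := by
  have hcol : M *ᵥ (M⁻¹ *ᵥ Pi.single j 1) = Pi.single j 1 := by
    rw [mulVec_mulVec, mul_nonsing_inv M hM, one_mulVec]
  have hpos := pos_of_mulVec_nonneg hoff hrow hG hadj (y := M⁻¹ *ᵥ Pi.single j 1)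
    (fun k => by rw [hcol, Pi.single_apply]; positivity) (by rw [hcol]; simp) i
  simpa [mulVec_single_one] using hpos

end Matrix

section laplacian

variable {V : Type*} [Fintype V] [DecidableEq V] {W : V → V → ℝ}

theorem isSymm_laplacian (hsymm : ∀ i j, W i j = W j i) : (laplacian W).IsSymm :=
  IsSymm.ext fun i j => by
    rcases eq_or_ne i j with rfl | hij
    · rfl
    · simp [laplacian, hij, hij.symm, hsymm i j]

theorem laplacian_apply_of_ne {i j : V} (hij : i ≠ j) : laplacian W i j = -W i j := by
  simp [laplacian, hij]

theorem sum_laplacian_apply (i : V) : ∑ j, laplacian W i j = W i i := by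
  have h : ∀ j, laplacian W i j = (if i = j then ∑ k, W i k + W i j else 0) - W i j := fun j => by
    rcases eq_or_ne i j with rfl | hij <;> simp [laplacian, *]
  simp only [h, Finset.sum_sub_distrib, Finset.sum_ite_eq, Finset.mem_univ, if_true]
  ring

theorem sum_laplacian_add_diagonal_apply (x : V → ℝ) (i : V) :
    ∑ j, (laplacian W + diagonal x) i j = W i i + x i := by
  simp [Finset.sum_add_distrib, sum_laplacian_apply, diagonal_apply]

end laplacian

theorem laplacian_add_diagonal_posDef_and_inv_pos_general {V : Type*} [Fintype V] [DecidableEq V]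
    (W : V → V → ℝ) (hsymm : ∀ i j, W i j = W j i)
    (hnonneg : ∀ i j, 0 ≤ W i j)
    (hconn : (weightedAdjGraph W hsymm).Connected)
    (x : V → ℝ) (hx : ∀ i, 0 ≤ x i) (hx0 : ∃ i, 0 < x i) :
    (laplacian W + Matrix.diagonal x).PosDef ∧
      ∀ i j, 0 < (laplacian W + Matrix.diagonal x)⁻¹ i j := by
  have hoff : ∀ i j, i ≠ j → (laplacian W + diagonal x) i j ≤ 0 := fun i j hij => by
    simp [laplacian_apply_of_ne hij, hij, hnonneg i j]
  have hadj : ∀ i j, (weightedAdjGraph W hsymm).Adj i j → (laplacian W + diagonal x) i j < 0 :=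
    fun i j ⟨hij, hW⟩ => by simpa [laplacian_apply_of_ne hij, hij] using hW
  have hrow : ∀ i, 0 ≤ ∑ j, (laplacian W + diagonal x) i j := fun i => by
    rw [sum_laplacian_add_diagonal_apply]
    linarith [hnonneg i i, hx i]
  obtain ⟨i₀, hi₀⟩ := hx0
  have hrow₀ : 0 < ∑ j, (laplacian W + diagonal x) i₀ j := by
    rw [sum_laplacian_add_diagonal_apply]
    linarith [hnonneg i₀ i₀]
  have hPD := posDef_of_isSymm_of_offDiag_nonpos
    ((isSymm_laplacian hsymm).add (isSymm_diagonal x)) hoff hrow ⟨i₀, hrow₀⟩ hconn hadj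
  exact ⟨hPD, inv_apply_pos_of_offDiag_nonpos
    ((isUnit_iff_isUnit_det _).mp hPD.isUnit) hoff hrow hconn hadj⟩

/-- For the Laplacian `L` of a connected weighted graph and a nonnegative diagonal
matrix `X` with at least one positive entry, `L + X` is positive definite and every
entry of `(L + X)⁻¹` is strictly positive. -/
theorem laplacian_add_diagonal_posDef_and_inv_pos {V : Type*} [Fintype V] [DecidableEq V]
    (W : V → V → ℝ) (hsymm : ∀ i j, W i j = W j i)
    (hdiag : ∀ i, W i i = 0) (hnonneg : ∀ i j, 0 ≤ W i j)
    (hconn : (weightedAdjGraph W hsymm).Connected)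
    (x : V → ℝ) (hx : ∀ i, 0 ≤ x i) (hx0 : ∃ i, 0 < x i) :
    (laplacian W + Matrix.diagonal x).PosDef ∧
      ∀ i j, 0 < (laplacian W + Matrix.diagonal x)⁻¹ i j :=
  laplacian_add_diagonal_posDef_and_inv_pos_general W hsymm hnonneg hconn x hx hx0
end

section
/- Let L be the Laplacian matrix of a connected weighted graph on a finite vertex set V, and let Q be a nonempty proper subset of V. Then the grounded Laplacian L_Q, i.e., the principal submatrix of L obtained by deleting the rows and columns with indices in Q, is positive definite (in particular, it is invertible). -/
/-!
The quadratic form of the Laplacian is the Dirichlet energy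
`x ⬝ᵥ L x = ½ ∑ᵢⱼ W i j (x i - x j)² + ∑ᵢ W i i (x i)²`, which is nonnegative. The quadratic
form of `L_Q` at `x` is that of `L` at the extension of `x` by zero on `Q`. If it vanished, this
extension would be constant along every edge, hence constant on the connected graph, hence zero
because it vanishes on `Q ≠ ∅`.
-/

open Matrix

/-- The grounded Laplacian `L_Q`: the principal submatrix of `L` indexed by `V \ Q`. -/
def grounded {V : Type*} (L : Matrix V V ℝ) (Q : Finset V) :
    Matrix {i // i ∉ Q} {i // i ∉ Q} ℝ :=
  L.submatrix Subtype.val Subtype.val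

open Finset Function

theorem SimpleGraph.Reachable.apply_eq_of_forall_adj {V α : Type*} {G : SimpleGraph V}
    {f : V → α} (hf : ∀ i j, G.Adj i j → f i = f j) {i j : V} (h : G.Reachable i j) :
    f i = f j := by
  obtain ⟨w⟩ := h
  induction w with
  | nil => rfl
  | cons hadj _ ih => exact (hf _ _ hadj).trans ih

theorem Matrix.dotProduct_submatrix_mulVec {m n R : Type*} [Fintype m] [Fintype n]
    [NonUnitalNonAssocSemiring R] (M : Matrix n n R) {f : m → n} (hf : Injective f)
    (x : m → R) :
    x ⬝ᵥ (M.submatrix f f *ᵥ x) = extend f x 0 ⬝ᵥ (M *ᵥ extend f x 0) := by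
  have hout : ∀ j ∉ Set.range f, extend f x 0 j = 0 := fun j hj =>
    extend_apply' _ _ _ (by simpa using hj)
  have hrow : ∀ i, (M.submatrix f f *ᵥ x) i = (M *ᵥ extend f x 0) (f i) := fun i =>
    Fintype.sum_of_injective f hf _ _ (fun j hj => by simp [hout j hj])
      (fun k => by simp [hf.extend_apply])
  exact Fintype.sum_of_injective f hf _ _ (fun j hj => by simp [hout j hj])
    (fun i => by rw [hrow, hf.extend_apply])

section Laplacian

variable {V : Type*} [Fintype V] [DecidableEq V] {W : V → V → ℝ}

theorem isHermitian_laplacian (hsymm : ∀ i j, W i j = W j i) : (laplacian W).IsHermitian := by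
  ext i j
  by_cases h : i = j
  · simp [laplacian, h]
  · simp [laplacian, h, Ne.symm h, hsymm i j]

variable (W) in
theorem laplacian_mulVec_apply (x : V → ℝ) (i : V) :
    (laplacian W *ᵥ x) i = ∑ j, W i j * (x i - x j) + W i i * x i := by
  have hentry : ∀ j, laplacian W i j * x j
      = (if i = j then (∑ k, W i k + W i i) * x i else 0) - W i j * x j := by
    intro j
    by_cases h : i = j
    · subst h; simp [laplacian]; ring
    · simp [laplacian, h]
  simp only [mulVec, dotProduct, hentry, sum_sub_distrib, sum_ite_eq, mem_univ, if_true,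
    mul_sub]
  rw [← sum_mul]
  ring

theorem dotProduct_laplacian_mulVec (hsymm : ∀ i j, W i j = W j i) (x : V → ℝ) :
    x ⬝ᵥ (laplacian W *ᵥ x) = (∑ i, ∑ j, W i j * (x i - x j) ^ 2) / 2 + ∑ i, W i i * x i ^ 2 := by
  have hswap : ∑ i, ∑ j, W i j * x i * (x i - x j) = ∑ i, ∑ j, W i j * x j * (x j - x i) := by
    rw [sum_comm]
    simp only [hsymm]
  have hsq : ∑ i, ∑ j, W i j * (x i - x j) ^ 2
      = ∑ i, ∑ j, W i j * x i * (x i - x j) + ∑ i, ∑ j, W i j * x j * (x j - x i) := by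
    simp only [← sum_add_distrib]
    exact sum_congr rfl fun i _ => sum_congr rfl fun j _ => by ring
  have hform : x ⬝ᵥ (laplacian W *ᵥ x)
      = ∑ i, ∑ j, W i j * x i * (x i - x j) + ∑ i, W i i * x i ^ 2 := by
    simp only [dotProduct, laplacian_mulVec_apply, mul_add, mul_sum, sum_add_distrib]
    congr 1
    · exact sum_congr rfl fun i _ => sum_congr rfl fun j _ => by ring
    · exact sum_congr rfl fun i _ => by ring
  rw [hform, hsq, ← hswap]
  ring

theorem dotProduct_laplacian_mulVec_pos (hsymm : ∀ i j, W i j = W j i)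
    (hnonneg : ∀ i j, 0 ≤ W i j) (hconn : (weightedAdjGraph W hsymm).Connected)
    {x : V → ℝ} {q : V} (hq : x q = 0) (hx : x ≠ 0) : 0 < x ⬝ᵥ (laplacian W *ᵥ x) := by
  have hterm : ∀ i j, 0 ≤ W i j * (x i - x j) ^ 2 := fun i j => by
    have := hnonneg i j; positivity
  have hrow : ∀ i ∈ univ, 0 ≤ ∑ j, W i j * (x i - x j) ^ 2 := fun i _ =>
    sum_nonneg fun j _ => hterm i j
  have hloops : 0 ≤ ∑ i, W i i * x i ^ 2 := sum_nonneg fun i _ => by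
    have := hnonneg i i; positivity
  have hdirichlet : ∑ i, ∑ j, W i j * (x i - x j) ^ 2 ≠ 0 := by
    intro hzero
    have hadj : ∀ i j, (weightedAdjGraph W hsymm).Adj i j → x i = x j := by
      intro i j hij
      have hij0 := (sum_eq_zero_iff_of_nonneg fun j _ => hterm i j).mp
        ((sum_eq_zero_iff_of_nonneg hrow).mp hzero i (mem_univ i)) j (mem_univ j)
      simpa [hij.2.ne', sub_eq_zero] using hij0
    exact hx <| funext fun i => ((hconn i q).apply_eq_of_forall_adj hadj).trans hq
  rw [dotProduct_laplacian_mulVec hsymm]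
  have := (sum_nonneg hrow).lt_of_ne' hdirichlet
  positivity

end Laplacian

theorem grounded_laplacian_posDef_general {V : Type*} [Fintype V] [DecidableEq V]
    (W : V → V → ℝ) (hsymm : ∀ i j, W i j = W j i)
    (hnonneg : ∀ i j, 0 ≤ W i j)
    (hconn : (weightedAdjGraph W hsymm).Connected)
    (Q : Finset V) (hQ : Q.Nonempty) :
    (grounded (laplacian W) Q).PosDef ∧ IsUnit (grounded (laplacian W) Q).det := by
  obtain ⟨q, hq⟩ := hQ
  have hinj : Injective (Subtype.val : {i // i ∉ Q} → V) := Subtype.val_injective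
  have hpd : (grounded (laplacian W) Q).PosDef := by
    refine .of_dotProduct_mulVec_pos ((isHermitian_laplacian hsymm).submatrix _) fun x hx => ?_
    have hext_ne : extend Subtype.val x 0 ≠ 0 := fun h =>
      hx <| funext fun i => by simpa [hinj.extend_apply] using congrFun h i
    have hext_q : extend Subtype.val x 0 q = 0 :=
      extend_apply' _ _ _ fun ⟨i, hi⟩ => i.2 (hi ▸ hq)
    rw [star_trivial, grounded, dotProduct_submatrix_mulVec _ hinj]
    exact dotProduct_laplacian_mulVec_pos hsymm hnonneg hconn hext_q hext_ne
  exact ⟨hpd, hpd.det_pos.ne'.isUnit⟩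

/-- For a connected weighted graph and a nonempty proper subset `Q` of vertices, the
grounded Laplacian `L_Q` is positive definite; in particular it is invertible. -/
theorem grounded_laplacian_posDef {V : Type*} [Fintype V] [DecidableEq V]
    (W : V → V → ℝ) (hsymm : ∀ i j, W i j = W j i)
    (hdiag : ∀ i, W i i = 0) (hnonneg : ∀ i j, 0 ≤ W i j)
    (hconn : (weightedAdjGraph W hsymm).Connected)
    (Q : Finset V) (hQ : Q.Nonempty) (hQproper : Q ≠ Finset.univ) :
    (grounded (laplacian W) Q).PosDef ∧ IsUnit (grounded (laplacian W) Q).det :=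
  grounded_laplacian_posDef_general W hsymm hnonneg hconn Q hQ
end

section
/- Let A be a symmetric positive definite real matrix indexed by a finite type, and let D and D' be diagonal matrices with 0 ≤ D i i ≤ D' i i for every index i and D ≠ D'. Then trace((A + D')^{-1}) < trace((A + D)^{-1}). (This expresses that the effective resistance R_Q(S) = trace(L(S)_Q^{-1}) of the leader group Q is strictly monotonically decreasing in the set S of added edges incident to Q: if S ⊊ T ⊆ E_Q then R_Q(T) < R_Q(S).) -/
/-!
If `B ≤ C` in the Loewner order, the block matrix `[[C, 1], [1, B⁻¹]]` is positive semidefinite,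
since its Schur complement with respect to `B⁻¹` is `C - B`. Taking instead the Schur complement
with respect to `C` gives `C⁻¹ ≤ B⁻¹`. A nonzero positive semidefinite matrix has positive trace,
so `trace C⁻¹ < trace B⁻¹` as soon as `B ≠ C`; apply this to `B = A + D` and `C = A + D'`.
-/

open Matrix

namespace Matrix

variable {n : Type*} [Fintype n] [DecidableEq n]

theorem PosDef.posSemidef_inv_sub_inv {K : Type*} [Field K] [PartialOrder K] [StarRing K]
    [StarOrderedRing K] {B C : Matrix n n K} (hB : B.PosDef) (hC : C.PosDef)
    (hBC : (C - B).PosSemidef) : (B⁻¹ - C⁻¹).PosSemidef := by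
  let := hC.isUnit.invertible
  let := hB.isUnit.invertible
  have hblock : (fromBlocks C 1 1ᴴ B⁻¹).PosSemidef := by
    rwa [PosDef.fromBlocks₂₂ _ _ hB.inv, inv_inv_of_invertible, conjTranspose_one,
      Matrix.one_mul, Matrix.mul_one]
  simpa using (PosDef.fromBlocks₁₁ _ _ hC).mp hblock

open scoped ComplexOrder in
theorem PosDef.trace_inv_lt_trace_inv {𝕜 : Type*} [RCLike 𝕜] {B C : Matrix n n 𝕜}
    (hB : B.PosDef) (hC : C.PosDef) (hBC : (C - B).PosSemidef) (hne : B ≠ C) :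
    C⁻¹.trace < B⁻¹.trace := by
  have hpsd := hB.posSemidef_inv_sub_inv hC hBC
  have hinv_ne : B⁻¹ - C⁻¹ ≠ 0 :=
    sub_ne_zero.mpr fun h ↦ hne (inv_inj h ((isUnit_iff_isUnit_det B).mp hB.isUnit))
  have hpos : 0 < (B⁻¹ - C⁻¹).trace :=
    hpsd.trace_nonneg.lt_of_ne' (hpsd.trace_eq_zero_iff.not.mpr hinv_ne)
  rwa [trace_sub, sub_pos] at hpos

end Matrix

/-- For a symmetric positive definite matrix `A` and diagonal matrices `D ≤ D'`
(entrywise, with nonnegative entries) with `D ≠ D'`, we have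
`trace((A + D')⁻¹) < trace((A + D)⁻¹)`: the effective resistance
`R_Q(S) = trace(L(S)_Q⁻¹)` is strictly decreasing in the set of added edges. -/
theorem trace_inv_strict_anti_diagonal {n : Type*} [Fintype n] [DecidableEq n]
    (A : Matrix n n ℝ) (hA : A.PosDef)
    (d d' : n → ℝ) (hd : ∀ i, 0 ≤ d i) (hdd' : ∀ i, d i ≤ d' i) (hne : d ≠ d') :
    ((A + Matrix.diagonal d')⁻¹).trace < ((A + Matrix.diagonal d)⁻¹).trace := by
  have hB : (A + diagonal d).PosDef := hA.add_posSemidef (.diagonal hd)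
  have hC : (A + diagonal d').PosDef :=
    hA.add_posSemidef (.diagonal fun i ↦ (hd i).trans (hdd' i))
  refine hB.trace_inv_lt_trace_inv hC ?_ ?_
  · rw [add_sub_add_left_eq_sub, diagonal_sub]
    exact .diagonal fun i ↦ sub_nonneg.mpr (hdd' i)
  · exact fun h ↦ hne (diagonal_injective (add_left_cancel h))
end

section
/- Let A be a symmetric positive definite real matrix indexed by a finite type, let u be an index with standard basis vector e_u, and let w > 0 be a real number. Then trace(A^{-1}) - trace((A + w·e_u e_uᵀ)^{-1}) = w·‖A^{-1} e_u‖² / (1 + w·e_uᵀ A^{-1} e_u), and this quantity is strictly positive. -/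
/-!
For symmetric `A`, Sherman–Morrison gives
`(A + w e eᵀ)⁻¹ = A⁻¹ - w (1 + w eᵀA⁻¹e)⁻¹ (A⁻¹e)(A⁻¹e)ᵀ`,
and the trace of the rank-one correction is `w ‖A⁻¹e‖² / (1 + w eᵀA⁻¹e)`. Since `A⁻¹` is
positive definite, `eᵀA⁻¹e > 0`, so the denominator is positive and `A⁻¹e ≠ 0`.
-/

open Matrix

namespace Matrix

variable {n K : Type*} [Fintype n] [DecidableEq n] [Field K]

/-- The Sherman–Morrison formula. -/
theorem inv_add_vecMulVec {A : Matrix n n K} (hA : IsUnit A.det) {x y : n → K}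
    (hxy : 1 + y ⬝ᵥ (A⁻¹ *ᵥ x) ≠ 0) :
    (A + vecMulVec x y)⁻¹ =
      A⁻¹ - (1 + y ⬝ᵥ (A⁻¹ *ᵥ x))⁻¹ • vecMulVec (A⁻¹ *ᵥ x) (y ᵥ* A⁻¹) := by
  set k := (1 + y ⬝ᵥ (A⁻¹ *ᵥ x))⁻¹
  have hAA : A * A⁻¹ = 1 := mul_nonsing_inv A hA
  have hk : k + k * (y ⬝ᵥ (A⁻¹ *ᵥ x)) = 1 := by
    rw [← mul_one_add]; exact inv_mul_cancel₀ hxy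
  apply inv_eq_right_inv
  calc (A + vecMulVec x y) * (A⁻¹ - k • vecMulVec (A⁻¹ *ᵥ x) (y ᵥ* A⁻¹))
      = 1 + (1 - (k + k * (y ⬝ᵥ (A⁻¹ *ᵥ x)))) • vecMulVec x (y ᵥ* A⁻¹) := by
        rw [add_mul, mul_sub, mul_sub, Matrix.mul_smul, Matrix.mul_smul, hAA, mul_vecMulVec A,
          mulVec_mulVec, hAA, one_mulVec, vecMulVec_mul_vecMulVec, vecMulVec_mul, vecMulVec_smul,
          smul_smul, sub_smul, add_smul, one_smul]
        abel
    _ = 1 := by rw [hk, sub_self, zero_smul, add_zero]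

theorem trace_inv_sub_trace_inv_add_vecMulVec {A : Matrix n n K} (hA : IsUnit A.det)
    {x y : n → K} (hxy : 1 + y ⬝ᵥ (A⁻¹ *ᵥ x) ≠ 0) :
    A⁻¹.trace - (A + vecMulVec x y)⁻¹.trace =
      (A⁻¹ *ᵥ x) ⬝ᵥ (y ᵥ* A⁻¹) / (1 + y ⬝ᵥ (A⁻¹ *ᵥ x)) := by
  rw [inv_add_vecMulVec hA hxy, trace_sub, trace_smul, trace_vecMulVec, sub_sub_cancel,
    smul_eq_mul, inv_mul_eq_div]

theorem trace_inv_sub_trace_inv_add_smul_vecMulVec_self {A : Matrix n n K} (hA : IsUnit A.det)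
    (hAs : A.IsSymm) {w : K} {x : n → K} (hx : 1 + w * (x ⬝ᵥ (A⁻¹ *ᵥ x)) ≠ 0) :
    A⁻¹.trace - (A + w • vecMulVec x x)⁻¹.trace =
      w * ((A⁻¹ *ᵥ x) ⬝ᵥ (A⁻¹ *ᵥ x)) / (1 + w * (x ⬝ᵥ (A⁻¹ *ᵥ x))) := by
  have hxA : x ᵥ* A⁻¹ = A⁻¹ *ᵥ x := by rw [← vecMul_transpose, hAs.inv.eq]
  rw [← smul_vecMulVec, trace_inv_sub_trace_inv_add_vecMulVec hA
      (by rwa [mulVec_smul, dotProduct_smul, smul_eq_mul]),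
    mulVec_smul, dotProduct_smul, smul_dotProduct, hxA, smul_eq_mul, smul_eq_mul]

end Matrix

/-- Sherman–Morrison trace identity: for a symmetric positive definite matrix `A`, an
index `u` and a weight `w > 0`,
`trace(A⁻¹) - trace((A + w·e_u e_uᵀ)⁻¹) = w·‖A⁻¹ e_u‖² / (1 + w·e_uᵀ A⁻¹ e_u)`,
and this quantity is strictly positive. -/
theorem trace_inv_rank_one_update {n : Type*} [Fintype n] [DecidableEq n]
    (A : Matrix n n ℝ) (hA : A.PosDef) (u : n) (w : ℝ) (hw : 0 < w) :
    A⁻¹.trace - ((A + Matrix.single u u w)⁻¹).trace =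
        w * (∑ i, (A⁻¹ *ᵥ Pi.single u 1) i ^ 2) /
          (1 + w * (Pi.single u 1 ⬝ᵥ (A⁻¹ *ᵥ Pi.single u 1))) ∧
      0 < A⁻¹.trace - ((A + Matrix.single u u w)⁻¹).trace := by
  set e : n → ℝ := Pi.single u 1
  set v := A⁻¹ *ᵥ e
  have hc : 0 < e ⬝ᵥ v := hA.inv.dotProduct_mulVec_pos (Pi.single_ne_zero_iff.mpr one_ne_zero)
  have hv : v ≠ 0 := by rintro hv; simp [hv] at hc
  have hdenom : 0 < 1 + w * (e ⬝ᵥ v) := by positivity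
  have hsingle : Matrix.single u u w = w • vecMulVec e e := by
    rw [← single_eq_single_vecMulVec_single, smul_single, smul_eq_mul, mul_one]
  have hsq : v ⬝ᵥ v = ∑ i, v i ^ 2 := by simp only [dotProduct, sq]
  have htrace : A⁻¹.trace - ((A + Matrix.single u u w)⁻¹).trace =
      w * (∑ i, v i ^ 2) / (1 + w * (e ⬝ᵥ v)) := by
    rw [hsingle, trace_inv_sub_trace_inv_add_smul_vecMulVec_self
      ((isUnit_iff_isUnit_det A).mp hA.isUnit) (isHermitian_iff_isSymm.mp hA.1) hdenom.ne', hsq]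
  refine ⟨htrace, htrace ▸ div_pos (mul_pos hw ?_) hdenom⟩
  simpa only [← hsq, star_trivial] using dotProduct_self_star_pos_iff.mpr hv
end

section
/- Let X be a finite type, let C be a finite subset of X (the candidate set), and let f : Finset X → ℝ be monotone decreasing (S ⊆ T implies f(T) ≤ f(S)) and supermodular. Fix k with 1 ≤ k ≤ |C| and define the greedy sequence S_0 = ∅ and S_{i+1} = S_i ∪ {e_i}, where e_i ∈ C \ S_i attains the maximum of f(S_i) - f(S_i ∪ {e}) over all e ∈ C \ S_i. Then for every subset T ⊆ C with |T| = k: f(∅) - f(S_k) ≥ (1 - 1/e)·(f(∅) - f(T)), where e is Euler's number. -/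
/-!
Write `u i = f (S_i) - f T`. By monotonicity and supermodularity,
`u i ≤ f (S_i) - f (S_i ∪ T) ≤ ∑_{a ∈ T} (f (S_i) - f (S_i ∪ {a}))`, and each of these `k`
marginal gains is at most the greedy one, so the greedy step lowers `u` by at least `u i / k`.
Hence `u k ≤ (1 - 1/k)^k · u 0 ≤ e⁻¹ · u 0`.
-/

open Finset

section Supermodular

variable {X : Type*} [DecidableEq X] {f : Finset X → ℝ}

theorem sub_union_le_sum_marginal
    (hsuper : ∀ S T : Finset X, S ⊆ T → ∀ a ∉ T, f T - f (insert a T) ≤ f S - f (insert a S))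
    (S A : Finset X) : f S - f (S ∪ A) ≤ ∑ a ∈ A, (f S - f (insert a S)) := by
  induction A using Finset.induction_on with
  | empty => simp
  | insert a A haA ih =>
    rw [sum_insert haA, union_insert]
    by_cases haS : a ∈ S
    · rw [insert_eq_self.2 (mem_union_left A haS), insert_eq_self.2 haS]
      linarith
    · have := hsuper S (S ∪ A) subset_union_left a (by simp [haS, haA])
      linarith

theorem sub_le_card_mul_of_marginal_le (hmono : ∀ S T : Finset X, S ⊆ T → f T ≤ f S)
    (hsuper : ∀ S T : Finset X, S ⊆ T → ∀ a ∉ T, f T - f (insert a T) ≤ f S - f (insert a S))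
    {S T : Finset X} {δ : ℝ} (hδ : ∀ a ∈ T, f S - f (insert a S) ≤ δ) :
    f S - f T ≤ T.card * δ :=
  calc f S - f T ≤ f S - f (S ∪ T) := by linarith [hmono T (S ∪ T) subset_union_right]
    _ ≤ ∑ a ∈ T, (f S - f (insert a S)) := sub_union_le_sum_marginal hsuper S T
    _ ≤ ∑ _a ∈ T, δ := sum_le_sum hδ
    _ = T.card * δ := by rw [sum_const, nsmul_eq_mul]

theorem greedy_step_le (hmono : ∀ S T : Finset X, S ⊆ T → f T ≤ f S)
    (hsuper : ∀ S T : Finset X, S ⊆ T → ∀ a ∉ T, f T - f (insert a T) ≤ f S - f (insert a S))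
    {C S T : Finset X} {e : X} {k : ℕ}
    (hmax : ∀ e' ∈ C \ S, f S - f (insert e' S) ≤ f S - f (insert e S))
    (hT : T ⊆ C) (hTcard : T.card = k) (hk : (0 : ℝ) < k) :
    f (insert e S) - f T ≤ (1 - 1 / k) * (f S - f T) := by
  have hgain : ∀ a ∈ T, f S - f (insert a S) ≤ f S - f (insert e S) := by
    intro a ha
    by_cases haS : a ∈ S
    · rw [insert_eq_self.2 haS]
      linarith [hmono S (insert e S) (subset_insert e S)]
    · exact hmax a (mem_sdiff.2 ⟨hT ha, haS⟩)
  have hcard := sub_le_card_mul_of_marginal_le hmono hsuper hgain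
  rw [hTcard] at hcard
  have : (f S - f T) / k ≤ f S - f (insert e S) := by
    rw [div_le_iff₀ hk]
    linarith
  calc f (insert e S) - f T = (f S - f T) - (f S - f (insert e S)) := by ring
    _ ≤ (f S - f T) - (f S - f T) / k := by linarith
    _ = (1 - 1 / k) * (f S - f T) := by ring

end Supermodular

theorem greedy_supermodular_guarantee_general {X : Type*} [DecidableEq X]
    (f : Finset X → ℝ)
    (hmono : ∀ S T : Finset X, S ⊆ T → f T ≤ f S)
    (hsuper : ∀ S T : Finset X, S ⊆ T → ∀ a ∉ T,
      f T - f (insert a T) ≤ f S - f (insert a S))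
    (C : Finset X) (k : ℕ) (hk1 : 1 ≤ k)
    (Sg : ℕ → Finset X) (h0 : Sg 0 = ∅)
    (hstep : ∀ i < k, ∃ e ∈ C \ Sg i, Sg (i + 1) = insert e (Sg i) ∧
      ∀ e' ∈ C \ Sg i, f (Sg i) - f (insert e' (Sg i)) ≤ f (Sg i) - f (insert e (Sg i)))
    (T : Finset X) (hT : T ⊆ C) (hTcard : T.card = k) :
    (1 - 1 / Real.exp 1) * (f ∅ - f T) ≤ f ∅ - f (Sg k) := by
  have hk1' : (1 : ℝ) ≤ k := by exact_mod_cast hk1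
  have hk : (0 : ℝ) < k := by linarith
  have hratio : 0 ≤ 1 - 1 / (k : ℝ) := by
    rw [sub_nonneg, div_le_one hk]
    exact hk1'
  have hgeom : f (Sg k) - f T ≤ (1 - 1 / (k : ℝ)) ^ k * (f (Sg 0) - f T) :=
    le_geom (u := fun i => f (Sg i) - f T) hratio k fun i hi => by
      obtain ⟨e, -, hSg, hmax⟩ := hstep i hi
      simpa only [hSg] using greedy_step_le hmono hsuper hmax hT hTcard hk
  have hexp : (1 - 1 / (k : ℝ)) ^ k ≤ Real.exp (-1) := Real.one_sub_div_pow_le_exp_neg hk1'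
  have hT0 : f T ≤ f ∅ := hmono ∅ T (empty_subset T)
  rw [h0] at hgeom
  rw [one_div, ← Real.exp_neg]
  nlinarith [mul_le_mul_of_nonneg_right hexp (sub_nonneg.2 hT0)]

/-- Greedy guarantee for minimizing a monotone decreasing supermodular set function:
if at each of the `k` steps the greedy sequence `Sg` adds an element of the candidate
set `C` with maximum marginal gain, then for every `T ⊆ C` with `|T| = k`,
`f(∅) - f(S_k) ≥ (1 - 1/e)·(f(∅) - f(T))`. -/
theorem greedy_supermodular_guarantee {X : Type*} [Fintype X] [DecidableEq X]
    (f : Finset X → ℝ)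
    (hmono : ∀ S T : Finset X, S ⊆ T → f T ≤ f S)
    (hsuper : ∀ S T : Finset X, S ⊆ T → ∀ a ∉ T,
      f T - f (insert a T) ≤ f S - f (insert a S))
    (C : Finset X) (k : ℕ) (hk1 : 1 ≤ k) (hk2 : k ≤ C.card)
    (Sg : ℕ → Finset X) (h0 : Sg 0 = ∅)
    (hstep : ∀ i < k, ∃ e ∈ C \ Sg i, Sg (i + 1) = insert e (Sg i) ∧
      ∀ e' ∈ C \ Sg i, f (Sg i) - f (insert e' (Sg i)) ≤ f (Sg i) - f (insert e (Sg i)))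
    (T : Finset X) (hT : T ⊆ C) (hTcard : T.card = k) :
    (1 - 1 / Real.exp 1) * (f ∅ - f T) ≤ f ∅ - f (Sg k) :=
  greedy_supermodular_guarantee_general f hmono hsuper C k hk1 Sg h0 hstep T hT hTcard
end

section
/- Let X be a finite type and let f : Finset X → ℝ be monotone decreasing and supermodular. Then for any finite sets S, T ⊆ X with T \ S nonempty, there exists an element e ∈ T \ S such that f(S) - f(S ∪ {e}) ≥ (f(S) - f(S ∪ T)) / |T \ S|. -/
/-- For a monotone decreasing supermodular set function `f` and finite sets `S, T` with
`T \ S` nonempty, some element `e ∈ T \ S` has marginal gain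
`f(S) - f(S ∪ {e}) ≥ (f(S) - f(S ∪ T)) / |T \ S|`. -/
theorem exists_good_element_supermodular {X : Type*} [Fintype X] [DecidableEq X]
    (f : Finset X → ℝ)
    (hmono : ∀ S T : Finset X, S ⊆ T → f T ≤ f S)
    (hsuper : ∀ S T : Finset X, S ⊆ T → ∀ a ∉ T,
      f T - f (insert a T) ≤ f S - f (insert a S))
    (S T : Finset X) (hne : (T \ S).Nonempty) :
    ∃ e ∈ T \ S, (f S - f (S ∪ T)) / ((T \ S).card : ℝ) ≤ f S - f (insert e S) := by
  have key : ∀ D : Finset X, Disjoint D S →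
      f S - f (S ∪ D) ≤ ∑ e ∈ D, (f S - f (insert e S)) := by
    intro D
    induction D using Finset.induction_on with
    | empty => simp
    | @insert a D ha ih =>
      intro hdisj
      have haS : a ∉ S := Finset.disjoint_left.mp hdisj (Finset.mem_insert_self a D)
      have hdD : Disjoint D S := hdisj.mono_left (Finset.subset_insert a D)
      have haSD : a ∉ S ∪ D := by simp [haS, ha]
      have h1 := hsuper S (S ∪ D) Finset.subset_union_left a haSD
      rw [Finset.sum_insert ha, Finset.union_insert]
      have := ih hdD
      linarith
  have hdisj : Disjoint (T \ S) S := Finset.sdiff_disjoint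
  have hST : S ∪ T = S ∪ (T \ S) := by
    rw [Finset.union_sdiff_self_eq_union]
  have hsum : f S - f (S ∪ T) ≤ ∑ e ∈ T \ S, (f S - f (insert e S)) := by
    rw [hST]; exact key _ hdisj
  have hcard : (0 : ℝ) < ((T \ S).card : ℝ) := by
    exact_mod_cast Finset.card_pos.mpr hne
  have hconst : ∑ _e ∈ T \ S, (f S - f (S ∪ T)) / ((T \ S).card : ℝ)
      ≤ ∑ e ∈ T \ S, (f S - f (insert e S)) := by
    rw [Finset.sum_const, nsmul_eq_mul, mul_div_cancel₀ _ (ne_of_gt hcard)]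
    exact hsum
  exact Finset.exists_le_of_sum_le hne hconst
end

section
/- Let X be a finite type, let C be a finite subset of X, and let f : Finset X → ℝ be monotone decreasing and supermodular. Fix k with 1 ≤ k ≤ |C| and a real number ε with 0 ≤ ε ≤ 1/4, and let S* ⊆ C with |S*| = k. Define Ŝ_0 = ∅ and Ŝ_{i+1} = Ŝ_i ∪ {ê_i} for 0 ≤ i < k, where ê_i ∈ C \ Ŝ_i is any element whose gain satisfies f(Ŝ_i) - f(Ŝ_i ∪ {ê_i}) ≥ (1-3ε)·max_{e ∈ C \ Ŝ_i} (f(Ŝ_i) - f(Ŝ_i ∪ {e})). Then f(Ŝ_k) - f(S*) ≤ (1 - (1-3ε)/k)^k · (f(∅) - f(S*)). -/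
/-- Guarantee for the noisy greedy algorithm: if at each step the chosen element's
marginal gain is at least `(1-3ε)` times the best available gain, then the `k`-step
greedy solution `Ŝ_k` satisfies
`f(Ŝ_k) - f(S*) ≤ (1 - (1-3ε)/k)^k · (f(∅) - f(S*))`. -/
theorem noisy_greedy_supermodular_guarantee {X : Type*} [Fintype X] [DecidableEq X]
    (f : Finset X → ℝ)
    (hmono : ∀ S T : Finset X, S ⊆ T → f T ≤ f S)
    (hsuper : ∀ S T : Finset X, S ⊆ T → ∀ a ∉ T,
      f T - f (insert a T) ≤ f S - f (insert a S))
    (C : Finset X) (k : ℕ) (hk1 : 1 ≤ k) (hk2 : k ≤ C.card)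
    (ε : ℝ) (hε0 : 0 ≤ ε) (hε1 : ε ≤ 1 / 4)
    (Sstar : Finset X) (hSstar : Sstar ⊆ C) (hSstarcard : Sstar.card = k)
    (Sg : ℕ → Finset X) (h0 : Sg 0 = ∅)
    (hstep : ∀ i < k, ∃ e ∈ C \ Sg i, Sg (i + 1) = insert e (Sg i) ∧
      ∀ e' ∈ C \ Sg i,
        (1 - 3 * ε) * (f (Sg i) - f (insert e' (Sg i))) ≤ f (Sg i) - f (insert e (Sg i))) :
    f (Sg k) - f Sstar ≤ (1 - (1 - 3 * ε) / (k : ℝ)) ^ k * (f ∅ - f Sstar) := by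
  set c : ℝ := 1 - 3 * ε with hc
  have hc0 : 0 < c := by simp only [hc]; linarith
  have hc1 : c ≤ 1 := by simp only [hc]; linarith
  have hkpos : (0:ℝ) < (k:ℝ) := by exact_mod_cast hk1
  have hratio0 : 0 ≤ 1 - c / (k:ℝ) := by
    have : c / (k:ℝ) ≤ 1 := by
      rw [div_le_one hkpos]
      calc c ≤ 1 := hc1
      _ ≤ (k:ℝ) := by exact_mod_cast hk1
    linarith
  have gain_nonneg : ∀ (e' : X) (S : Finset X), 0 ≤ f S - f (insert e' S) := by
    intro e' S
    have := hmono S (insert e' S) (Finset.subset_insert _ _)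
    linarith
  -- key subadditivity lemma
  have key : ∀ (T S : Finset X),
      f S - f (S ∪ T) ≤ ∑ e ∈ T \ S, (f S - f (insert e S)) := by
    intro T
    induction T using Finset.induction_on with
    | empty => intro S; simp
    | @insert a T ha ih =>
      intro S
      by_cases haS : a ∈ S
      · have h1 : S ∪ insert a T = S ∪ T := by
          ext x; simp only [Finset.mem_union, Finset.mem_insert]
          constructor
          · rintro (h | rfl | h) <;> simp_all
          · rintro (h | h) <;> simp_all
        have h2 : insert a T \ S = T \ S := by
          ext x; simp only [Finset.mem_sdiff, Finset.mem_insert]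
          constructor
          · rintro ⟨rfl | h, h2⟩ <;> simp_all
          · rintro ⟨h, h2⟩; exact ⟨Or.inr h, h2⟩
        rw [h1, h2]; exact ih S
      · have h1 : S ∪ insert a T = insert a (S ∪ T) := by
          ext x; simp only [Finset.mem_union, Finset.mem_insert]; tauto
        have haST : a ∉ S ∪ T := by simp [ha, haS]
        have h2 : insert a T \ S = insert a (T \ S) := by
          ext x; simp only [Finset.mem_sdiff, Finset.mem_insert]
          constructor
          · rintro ⟨rfl | h, h2⟩
            · exact Or.inl rfl
            · exact Or.inr ⟨h, h2⟩
          · rintro (rfl | ⟨h, h2⟩)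
            · exact ⟨Or.inl rfl, haS⟩
            · exact ⟨Or.inr h, h2⟩
        have hna : a ∉ T \ S := by simp [ha]
        rw [h1, h2, Finset.sum_insert hna]
        have hsup := hsuper S (S ∪ T) Finset.subset_union_left a haST
        have := ih S
        linarith
  -- per-step contraction
  have step : ∀ i < k, f (Sg (i+1)) - f Sstar ≤ (1 - c / (k:ℝ)) * (f (Sg i) - f Sstar) := by
    intro i hi
    obtain ⟨e, he, heq, hbest⟩ := hstep i hi
    set d : ℝ := f (Sg i) - f (insert e (Sg i)) with hd
    have hd0 : 0 ≤ d := gain_nonneg e (Sg i)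
    have h1 : f (Sg i) - f Sstar ≤ f (Sg i) - f (Sg i ∪ Sstar) := by
      have := hmono Sstar (Sg i ∪ Sstar) Finset.subset_union_right
      linarith
    have h2 := key Sstar (Sg i)
    have h3 : ∑ e' ∈ Sstar \ Sg i, (f (Sg i) - f (insert e' (Sg i)))
        ≤ (Sstar \ Sg i).card * (d / c) := by
      have hcard : ∀ e' ∈ Sstar \ Sg i, f (Sg i) - f (insert e' (Sg i)) ≤ d / c := by
        intro e' he'
        have he'C : e' ∈ C \ Sg i := by
          rw [Finset.mem_sdiff] at he' ⊢
          exact ⟨hSstar he'.1, he'.2⟩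
        have := hbest e' he'C
        rw [le_div_iff₀ hc0]
        linarith [this]
      calc ∑ e' ∈ Sstar \ Sg i, (f (Sg i) - f (insert e' (Sg i)))
          ≤ ∑ _e' ∈ Sstar \ Sg i, (d / c) := Finset.sum_le_sum hcard
        _ = (Sstar \ Sg i).card * (d / c) := by rw [Finset.sum_const, nsmul_eq_mul]
    have hcardle : ((Sstar \ Sg i).card : ℝ) ≤ (k:ℝ) := by
      have : (Sstar \ Sg i).card ≤ Sstar.card := Finset.card_le_card (Finset.sdiff_subset)
      exact_mod_cast this.trans_eq hSstarcard
    have hdc : 0 ≤ d / c := div_nonneg hd0 hc0.le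
    have h4 : f (Sg i) - f Sstar ≤ (k:ℝ) * (d / c) := by
      calc f (Sg i) - f Sstar ≤ ∑ e' ∈ Sstar \ Sg i, (f (Sg i) - f (insert e' (Sg i))) :=
            h1.trans h2
        _ ≤ (Sstar \ Sg i).card * (d / c) := h3
        _ ≤ (k:ℝ) * (d / c) := mul_le_mul_of_nonneg_right hcardle hdc
    -- from c * (g_i) ≤ k * d deduce the contraction
    have h5 : c * (f (Sg i) - f Sstar) ≤ (k:ℝ) * d := by
      rw [mul_comm (k:ℝ) (d/c), div_mul_eq_mul_div, mul_comm d (k:ℝ)] at h4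
      rw [← le_div_iff₀' hc0]
      exact h4.trans_eq (by ring)
    have h6 : (c / (k:ℝ)) * (f (Sg i) - f Sstar) ≤ d := by
      rw [div_mul_eq_mul_div, div_le_iff₀ hkpos, mul_comm d (k:ℝ)]
      linarith [h5]
    have : f (Sg (i+1)) = f (insert e (Sg i)) := by rw [heq]
    have hgi1 : f (Sg (i+1)) - f Sstar = (f (Sg i) - f Sstar) - d := by
      rw [this, hd]; ring
    rw [hgi1]
    nlinarith [h6]
  -- induction
  have main : ∀ i, i ≤ k → f (Sg i) - f Sstar ≤ (1 - c / (k:ℝ)) ^ i * (f ∅ - f Sstar) := by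
    intro i
    induction i with
    | zero => intro _; rw [h0]; simp
    | succ n ihn =>
      intro hn
      have hnk : n < k := hn
      have h1 := step n hnk
      have h2 := ihn hnk.le
      calc f (Sg (n+1)) - f Sstar ≤ (1 - c / (k:ℝ)) * (f (Sg n) - f Sstar) := h1
        _ ≤ (1 - c / (k:ℝ)) * ((1 - c / (k:ℝ)) ^ n * (f ∅ - f Sstar)) :=
            mul_le_mul_of_nonneg_left h2 hratio0
        _ = (1 - c / (k:ℝ)) ^ (n+1) * (f ∅ - f Sstar) := by ring
  exact main k le_rfl
end
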